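/- Let α be the generating planar curve of a complete helicoidal rotator in ℍ²×ℝ of pitch h > 0, with angle function ω (i.e., α = r(cos ω, sin ω)). Then ω(s) → +∞ as s → ±∞; in other words, each of the two arms of α spirals infinitely around the origin. -/

import Mathlib

open Filter

/-- The curvature function of the generating curve of an `h`-pitched helicoidal
rotator to MCF in `ℍ²×ℝ`. -/
noncomputable def kF (h τ μ : ℝ) : ℝ :=
  (2 * (τ ^ 2 + h ^ 2 * (1 + μ ^ 2)) * τ + (h ^ 2 - 1) * (1 + μ ^ 2) * μ) /
    ((1 + (τ ^ 2 + μ ^ 2)) * (h ^ 2 + (τ ^ 2 + μ ^ 2)))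

/-- `(τ, μ)` is a (global) solution of the rotator ODE system
`τ′ = 1 + kμ`, `μ′ = −kτ`. -/
def IsSol (h : ℝ) (τ μ : ℝ → ℝ) : Prop :=
  ∀ s : ℝ,
    HasDerivAt τ (1 + kF h (τ s) (μ s) * μ s) s ∧
    HasDerivAt μ (-(kF h (τ s) (μ s) * τ s)) s

set_option maxHeartbeats 1000000

lemma stays_pos (f f' : ℝ → ℝ) (a : ℝ)
    (hf : ∀ s, a ≤ s → HasDerivAt f (f' s) s)
    (hz : ∀ s, a ≤ s → f s = 0 → 0 < f' s)
    (ha : 0 ≤ f a) : ∀ b, a ≤ b → 0 ≤ f b := by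
  intro b hab
  by_contra hb
  push_neg at hb
  have hab' : a < b := by
    rcases eq_or_lt_of_le hab with rfl | h
    · linarith
    · exact h
  set S : Set ℝ := {s | s ∈ Set.Icc a b ∧ 0 ≤ f s} with hS
  have hSne : S.Nonempty := ⟨a, ⟨le_refl a, hab⟩, ha⟩
  have hSbdd : BddAbove S := ⟨b, fun s hs => hs.1.2⟩
  set c := sSup S with hc
  have hca : a ≤ c := le_csSup hSbdd ⟨⟨le_refl a, hab⟩, ha⟩
  have hcb : c ≤ b := csSup_le hSne (fun s hs => hs.1.2)
  have hfc_nonneg : 0 ≤ f c := by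
    by_contra hfc
    push_neg at hfc
    have hcont := (hf c hca).continuousAt
    rcases Metric.continuousAt_iff.mp hcont (-(f c)/2) (by linarith) with ⟨δ, hδ, hball⟩
    rcases exists_lt_of_lt_csSup hSne (show c - δ < c by linarith) with ⟨u, huS, hu⟩
    have huc : u ≤ c := le_csSup hSbdd huS
    have hdu : dist u c < δ := by
      rw [Real.dist_eq, abs_sub_lt_iff]
      constructor <;> linarith
    have h5 := hball hdu
    rw [Real.dist_eq, abs_sub_lt_iff] at h5
    have : f u < 0 := by linarith [h5.2]
    linarith [huS.2]
  have hcb' : c < b := by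
    refine lt_of_le_of_ne hcb (fun h => ?_)
    rw [h] at hfc_nonneg
    linarith
  have hneg : ∀ s, c < s → s ≤ b → f s < 0 := by
    intro s hcs hsb
    by_contra hfs
    push_neg at hfs
    have : s ∈ S := ⟨⟨le_trans hca hcs.le, hsb⟩, hfs⟩
    exact absurd (le_csSup hSbdd this) (not_le.mpr hcs)
  have hfc_nonpos : 0 ≥ f c := by
    have hcont : ContinuousWithinAt f (Set.Ioi c) c := ((hf c hca).continuousAt).continuousWithinAt
    have hmem : Set.Ioc c b ∈ nhdsWithin c (Set.Ioi c) := Ioc_mem_nhdsGT_of_mem ⟨le_refl c, hcb'⟩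
    exact le_of_tendsto hcont (by filter_upwards [hmem] with s hs using (hneg s hs.1 hs.2).le)
  have hfc : f c = 0 := le_antisymm hfc_nonpos hfc_nonneg
  have hder : 0 < f' c := hz c hca hfc
  have hslope : Tendsto (slope f c) (nhdsWithin c (Set.Ioi c)) (nhds (f' c)) := by
    have := (hasDerivAt_iff_tendsto_slope).mp (hf c hca)
    exact this.mono_left (nhdsWithin_mono c (by intro s hs; exact ne_of_gt hs))
  have hev : ∀ᶠ s in nhdsWithin c (Set.Ioi c), 0 < slope f c s :=
    hslope.eventually (eventually_gt_nhds hder)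
  have hmem : Set.Ioc c b ∈ nhdsWithin c (Set.Ioi c) := Ioc_mem_nhdsGT_of_mem ⟨le_refl c, hcb'⟩
  have : ∃ s, s ∈ Set.Ioc c b ∧ 0 < slope f c s := by
    have := hev.and (eventually_of_mem hmem (fun s hs => hs))
    rcases this.exists with ⟨s, h1, h2⟩
    exact ⟨s, h2, h1⟩
  rcases this with ⟨s, hs, hsl⟩
  rw [slope_def_field] at hsl
  have : 0 < (f s - f c) / (s - c) := by
    simpa [div_eq_div_iff] using hsl
  have hfs : 0 < f s := by
    rw [hfc, sub_zero] at this
    have hsc : 0 < s - c := sub_pos.mpr hs.1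
    have := (div_pos_iff.mp this)
    rcases this with ⟨h1, _⟩ | ⟨_, h2⟩
    · exact h1
    · linarith
  exact absurd hfs (not_lt.mpr (hneg s hs.1 hs.2).le)

/-- Monotone wrapper. -/
lemma mono_of_deriv_nonneg (f f' : ℝ → ℝ) (a : ℝ)
    (hf : ∀ s, a ≤ s → HasDerivAt f (f' s) s)
    (h0 : ∀ s, a ≤ s → 0 ≤ f' s) : MonotoneOn f (Set.Ici a) := by
  apply monotoneOn_of_deriv_nonneg (convex_Ici a)
  · intro s hs
    exact ((hf s hs).continuousAt).continuousWithinAt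
  · intro s hs
    rw [interior_Ici] at hs
    exact ((hf s hs.le).differentiableAt).differentiableWithinAt
  · intro s hs
    rw [interior_Ici] at hs
    rw [(hf s hs.le).deriv]
    exact h0 s hs.le

/-- If `f' ≥ c/(d+s)` on a tail, then `f → ∞`. -/
lemma tendsto_log_aux (f f' : ℝ → ℝ) (a c d : ℝ) (hc : 0 < c) (hd : 0 < d + a)
    (hf : ∀ s, a ≤ s → HasDerivAt f (f' s) s)
    (hge : ∀ s, a ≤ s → c / (d + s) ≤ f' s) :
    Tendsto f atTop atTop := by
  set g : ℝ → ℝ := fun s => f s - c * Real.log (d + s) with hg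
  have hdpos : ∀ s, a ≤ s → 0 < d + s := fun s hs => by linarith
  have hg' : ∀ s, a ≤ s → HasDerivAt g (f' s - c * (1/(d + s))) s := by
    intro s hs
    have h1 : HasDerivAt (fun t : ℝ => d + t) 1 s := by
      simpa using (hasDerivAt_id s).const_add d
    have h2 : HasDerivAt (fun t : ℝ => Real.log (d + t)) (1/(d+s)) s := by
      have := (Real.hasDerivAt_log (ne_of_gt (hdpos s hs))).comp s h1
      exact this.congr_deriv (by rw [one_div, mul_one])
    exact (hf s hs).sub (h2.const_mul c)
  have hmono : MonotoneOn g (Set.Ici a) := by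
    apply mono_of_deriv_nonneg g (fun s => f' s - c * (1/(d + s))) a hg'
    intro s hs
    have := hge s hs
    have h3 : c * (1/(d+s)) = c / (d + s) := by ring
    linarith [h3 ▸ this]
  have hkey : ∀ s, a ≤ s → g a + c * Real.log (d + s) ≤ f s := by
    intro s hs
    have := hmono (Set.mem_Ici.mpr (le_refl a)) (Set.mem_Ici.mpr hs) hs
    have hga : g a = f a - c * Real.log (d + a) := rfl
    have hgs : g s = f s - c * Real.log (d + s) := rfl
    rw [hga]
    linarith [hgs ▸ this]
  have hlog : Tendsto (fun s => g a + c * Real.log (d + s)) atTop atTop := by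
    apply tendsto_atTop_add_const_left
    apply Tendsto.const_mul_atTop hc
    exact Real.tendsto_log_atTop.comp (tendsto_atTop_add_const_left _ d tendsto_id)
  apply tendsto_atTop_mono' atTop _ hlog
  filter_upwards [eventually_ge_atTop a] with s hs using hkey s hs


lemma kF_denom_pos (h : ℝ) (hh : 0 < h) (a b : ℝ) :
    0 < (1 + (a ^ 2 + b ^ 2)) * (h ^ 2 + (a ^ 2 + b ^ 2)) := by positivity

/-- On the wall `τ = 0` : `τ' = h²(1+μ²)/(h²+μ²) ≥ min 1 h²`. -/
lemma kF_at_zero (h : ℝ) (hh : 0 < h) (b : ℝ) :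
    min 1 (h^2) ≤ 1 + kF h 0 b * b := by
  have hd := kF_denom_pos h hh 0 b
  have hkey : 1 + kF h 0 b * b = h^2 * (1 + b^2)^2 / ((1 + (0 ^ 2 + b ^ 2)) * (h ^ 2 + (0 ^ 2 + b ^ 2))) := by
    rw [kF]
    field_simp
    ring
  rw [hkey]
  rw [le_div_iff₀ hd]
  rcases min_cases 1 (h^2) with ⟨hm, hle⟩ | ⟨hm, hle⟩
  · rw [hm]
    nlinarith [mul_le_mul_of_nonneg_left hle (sq_nonneg b), sq_nonneg b, sq_nonneg (b*b)]
  · rw [hm]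
    nlinarith [mul_nonneg (mul_nonneg (sq_nonneg h)
      (by positivity : (0:ℝ) ≤ 1 + b^2)) (by linarith : (0:ℝ) ≤ 1 - h^2)]

/-- Uniform positivity of `τ'` in a strip around the wall. -/
lemma lemU (h : ℝ) (hh : 0 < h) (R : ℝ) (hR : 0 < R) :
    ∃ ε : ℝ, 0 < ε ∧ ε ≤ 1 ∧ ∀ a b : ℝ, |a| ≤ ε → b^2 ≤ R →
      min 1 (h^2) / 2 ≤ 1 + kF h a b * b := by
  set c₀ := min 1 (h^2) with hc₀
  have hc₀pos : 0 < c₀ := lt_min one_pos (by positivity)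
  set F : ℝ × ℝ → ℝ := fun p => 1 + kF h p.1 p.2 * p.2 with hF
  have hFcont : Continuous F := by
    apply Continuous.add continuous_const
    apply Continuous.mul _ continuous_snd
    unfold kF
    apply Continuous.div (by continuity) (by continuity)
    intro p
    exact ne_of_gt (kF_denom_pos h hh p.1 p.2)
  set C : Set (ℝ × ℝ) := {(0:ℝ)} ×ˢ Set.Icc (-(Real.sqrt R)) (Real.sqrt R) with hC
  have hCcomp : IsCompact C := isCompact_singleton.prod isCompact_Icc
  have hCsub : C ⊆ F ⁻¹' Set.Ioi (c₀/2) := by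
    rintro ⟨p1, p2⟩ ⟨hp1, _⟩
    simp only [Set.mem_singleton_iff] at hp1
    subst hp1
    simp only [Set.mem_preimage, Set.mem_Ioi, hF]
    have := kF_at_zero h hh p2
    linarith
  have hopen : IsOpen (F ⁻¹' Set.Ioi (c₀/2)) := IsOpen.preimage hFcont isOpen_Ioi
  obtain ⟨δ, hδpos, hδ⟩ := hCcomp.exists_thickening_subset_open hopen hCsub
  refine ⟨min (δ/2) 1, by positivity, min_le_right _ _, ?_⟩
  intro a b ha hb
  have hbmem : b ∈ Set.Icc (-(Real.sqrt R)) (Real.sqrt R) := by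
    constructor
    · have : |b| ≤ Real.sqrt R := by
        rw [← Real.sqrt_sq_eq_abs]
        exact Real.sqrt_le_sqrt hb
      linarith [neg_abs_le b]
    · have : |b| ≤ Real.sqrt R := by
        rw [← Real.sqrt_sq_eq_abs]
        exact Real.sqrt_le_sqrt hb
      linarith [le_abs_self b]
  have hmem : (a, b) ∈ Metric.thickening δ C := by
    rw [Metric.mem_thickening_iff]
    refine ⟨(0, b), ⟨rfl, hbmem⟩, ?_⟩
    rw [Prod.dist_eq]
    simp only [dist_self]
    have h1 : dist a 0 = |a| := by rw [Real.dist_eq, sub_zero]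
    rw [h1]
    have h2 : |a| ≤ min (δ/2) 1 := ha
    have h3 : min (δ/2) 1 ≤ δ/2 := min_le_left _ _
    calc max |a| 0 = |a| := max_eq_left (abs_nonneg a)
    _ ≤ δ/2 := le_trans h2 h3
    _ < δ := by linarith
  have := hδ hmem
  simp only [Set.mem_preimage, Set.mem_Ioi, hF] at this
  linarith

lemma A_neg (h a b rr : ℝ) (hh : 0 < h) (hr : 0 < rr) (h2 : rr^2 = a^2 + b^2)
    (hR : 1 + h^2 + 30*h^2/(min 1 (h^2)) ≤ rr^2)
    (hW0 : 0 ≤ b + 2*a) (hW9 : rr^2 ≤ 9*(b + 2*a)^2) :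
    -(kF h a b * (a^2 + b^2)) - b ≤ -(min 1 (h^2)/24 * rr) := by
  set c := min 1 (h^2) with hc
  have hc0 : 0 < c := lt_min one_pos (by positivity)
  have hc1 : c ≤ 1 := min_le_left _ _
  have hch : c ≤ h^2 := min_le_right _ _
  have hdivnn : 0 ≤ 30*h^2/c := by positivity
  have hr1 : 1 ≤ rr^2 := by nlinarith
  have hrh : h^2 ≤ rr^2 := by nlinarith
  have hr30 : 30*h^2 ≤ c * rr^2 := by
    have h3 : 30*h^2/c ≤ rr^2 := by nlinarith
    calc 30*h^2 = c * (30*h^2/c) := by field_simp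
    _ ≤ c * rr^2 := by apply mul_le_mul_of_nonneg_left h3 hc0.le
  have hrr1 : 1 ≤ rr := by nlinarith
  have hW3 : rr ≤ 3*(b + 2*a) := by nlinarith
  have habs_a : |a| ≤ rr := by
    rw [← Real.sqrt_sq_eq_abs, ← Real.sqrt_sq hr.le]
    exact Real.sqrt_le_sqrt (by nlinarith [sq_nonneg b])
  have habs_b : |b| ≤ rr := by
    rw [← Real.sqrt_sq_eq_abs, ← Real.sqrt_sq hr.le]
    exact Real.sqrt_le_sqrt (by nlinarith [sq_nonneg a])
  have ha_le : a ≤ rr := le_trans (le_abs_self a) habs_a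
  have ha_ge : -rr ≤ a := by linarith [neg_abs_le a]
  have hb_le : b ≤ rr := le_trans (le_abs_self b) habs_b
  have hb_ge : -rr ≤ b := by linarith [neg_abs_le b]
  have hD : 0 < (1 + (a^2 + b^2)) * (h^2 + (a^2 + b^2)) := by positivity
  -- exact algebraic identity for A
  have hkey : -(kF h a b * (a^2 + b^2)) - b =
      (-((a^2+b^2) * ((b + 2*a) * (a^2 + h^2*b^2))) - 2*h^2*(a^2+b^2)*(a+b) - h^2*b) /
        ((1 + (a^2 + b^2)) * (h^2 + (a^2 + b^2))) := by
    rw [kF]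
    field_simp
    ring
  -- numerator bound
  have e1 : c * rr^2 ≤ a^2 + h^2*b^2 := by nlinarith
  have e2 : (rr/3) * (c * rr^2) ≤ (b + 2*a) * (a^2 + h^2*b^2) := by
    apply mul_le_mul (by linarith) e1 (by positivity) (by linarith)
  have e3 : rr^2 * ((rr/3) * (c * rr^2)) ≤ rr^2 * ((b + 2*a) * (a^2 + h^2*b^2)) :=
    mul_le_mul_of_nonneg_left e2 (by positivity)
  have hmain : -((a^2+b^2) * ((b + 2*a) * (a^2 + h^2*b^2))) - 2*h^2*(a^2+b^2)*(a+b) - h^2*b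
      ≤ -(c/6 * rr^5) := by
    rw [← h2]
    have e4 : -(2*h^2*rr^2*(a+b)) ≤ 4*h^2*rr^3 := by
      nlinarith [mul_le_mul_of_nonneg_left (show -(a+b) ≤ 2*rr by linarith)
        (show (0:ℝ) ≤ 2*h^2*rr^2 by positivity)]
    have e5 : -(h^2*b) ≤ h^2*rr := by nlinarith [sq_nonneg h]
    have e6 : h^2*rr ≤ h^2*rr^3 := by
      nlinarith [mul_le_mul_of_nonneg_left
        (show rr ≤ rr^3 by nlinarith [mul_nonneg (mul_nonneg hr.le
          (by linarith : (0:ℝ) ≤ rr - 1)) (by linarith : (0:ℝ) ≤ rr + 1)]) (sq_nonneg h)]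
    have e7 : 5*(h^2*rr^3) ≤ (c/6) * rr^5 := by
      have := mul_le_mul_of_nonneg_right hr30 (show (0:ℝ) ≤ rr^3 by positivity)
      nlinarith [this]
    nlinarith [e3, e4, e5, e6, e7]
  -- conclude by dividing
  rw [hkey]
  have step1 : (-((a^2+b^2) * ((b + 2*a) * (a^2 + h^2*b^2))) - 2*h^2*(a^2+b^2)*(a+b) - h^2*b) /
      ((1 + (a^2 + b^2)) * (h^2 + (a^2 + b^2))) ≤
      (-(c/6 * rr^5)) / ((1 + (a^2 + b^2)) * (h^2 + (a^2 + b^2))) :=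
    (div_le_div_iff_of_pos_right hD).mpr hmain
  have hD4 : (1 + (a^2 + b^2)) * (h^2 + (a^2 + b^2)) ≤ 4 * rr^4 := by nlinarith
  have step2 : (-(c/6 * rr^5)) / ((1 + (a^2 + b^2)) * (h^2 + (a^2 + b^2))) ≤ -(c/24 * rr) := by
    rw [div_le_iff₀ hD]
    nlinarith [mul_le_mul_of_nonneg_left hD4 (show (0:ℝ) ≤ c/24 * rr by positivity)]
  exact le_trans step1 step2

/-- In the half plane `τ ≥ 0`, above the line `2μ = -r` one has `W = μ + 2τ ≥ (9/10) r`. -/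
lemma W_lower (a b rr : ℝ) (ha : 0 ≤ a) (hr : 0 < rr) (h2 : rr^2 = a^2 + b^2)
    (hb : 0 < 2*b + rr) : 9*rr ≤ 10*(b + 2*a) := by
  rcases le_or_gt (9*rr - 10*b) 0 with hcase | hcase
  · nlinarith
  · have hsq : (9*rr - 10*b)^2 ≤ (20*a)^2 := by
      nlinarith [mul_nonneg (by linarith : (0:ℝ) ≤ 2*b + rr) (by linarith : (0:ℝ) ≤ 9*rr - 10*b),
        mul_pos hr (show (0:ℝ) < 47*rr - 10*b by nlinarith)]
    nlinarith [hsq, mul_nonneg ha (by linarith : (0:ℝ) ≤ 9*rr - 10*b)]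

/-- The main dynamical proposition: for any global solution with the stated
derivative structure, the angle function diverges at `+∞`. -/
lemma mainProp (h : ℝ) (hh : 0 < h) (x y r ω : ℝ → ℝ)
    (hx : ∀ s, HasDerivAt x (1 + kF h (x s) (y s) * y s) s)
    (hy : ∀ s, HasDerivAt y (-(kF h (x s) (y s) * x s)) s)
    (hrpos : ∀ s, 0 < r s)
    (hρ : ∀ s, (r s)^2 = (x s)^2 + (y s)^2)
    (hr : ∀ s, HasDerivAt r (x s / r s) s)
    (hω : ∀ s, HasDerivAt ω (-(y s) / (r s)^2) s) :
    Tendsto ω atTop atTop := by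
  set c0 : ℝ := min 1 (h^2) with hc0def
  have hc0 : 0 < c0 := lt_min one_pos (by positivity)
  set R1 : ℝ := 1 + h^2 + 30*h^2/c0 with hR1def
  have hR1pos : 0 < R1 := by positivity
  set c3 : ℝ := c0/24 with hc3def
  have hc3 : 0 < c3 := by positivity
  set K : ℝ → ℝ := fun s => kF h (x s) (y s) with hK
  have hx' : ∀ s, HasDerivAt x (1 + K s * y s) s := hx
  have hy' : ∀ s, HasDerivAt y (-(K s * x s)) s := hy
  have hxr : ∀ s, |x s| ≤ r s := by
    intro s
    rw [← Real.sqrt_sq_eq_abs, ← Real.sqrt_sq (hrpos s).le]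
    exact Real.sqrt_le_sqrt (by nlinarith [hρ s, sq_nonneg (y s)])
  have hyr : ∀ s, |y s| ≤ r s := by
    intro s
    rw [← Real.sqrt_sq_eq_abs, ← Real.sqrt_sq (hrpos s).le]
    exact Real.sqrt_le_sqrt (by nlinarith [hρ s, sq_nonneg (x s)])
  -- derivative of r²
  have hr2' : ∀ s, HasDerivAt (fun t => (r t)^2) (2 * x s) s := by
    intro s
    have h1 := (hr s).pow 2
    refine h1.congr_deriv ?_
    symm
    field_simp [(hrpos s).ne']
    ring
  -- linear growth bound for r
  have hrlin : ∀ a s, a ≤ s → r s ≤ r a + (s - a) := by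
    intro a s has
    have hmono := mono_of_deriv_nonneg (fun t => t - r t) (fun t => 1 - x t / r t) a
      (fun t _ => (hasDerivAt_id t).sub (hr t))
      (fun t _ => by
        have hxle : x t ≤ r t := le_trans (le_abs_self _) (hxr t)
        have h1 : x t / r t ≤ 1 := (div_le_one (hrpos t)).mpr hxle
        linarith)
    have := hmono (Set.mem_Ici.mpr (le_refl a)) (Set.mem_Ici.mpr has) has
    simp only at this
    linarith
  -- the angular-velocity lower bound in the good cone
  have hGood : ∀ s, R1 ≤ (r s)^2 → 0 ≤ y s + 2*x s → (r s)^2 ≤ 9*(y s + 2*x s)^2 →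
      c3 * r s ≤ K s * (r s)^2 + y s := by
    intro s h1 h2 h3
    have := A_neg h (x s) (y s) (r s) hh (hrpos s) (hρ s) h1 h2 h3
    have heq : K s * (r s)^2 = kF h (x s) (y s) * ((x s)^2 + (y s)^2) := by
      rw [hK, hρ s]
    rw [← hc0def, ← hc3def] at this
    nlinarith [this, heq]
  -- derivative of x/r
  have hu' : ∀ s, HasDerivAt (fun t => x t / r t)
      (y s * (K s * (r s)^2 + y s) / (r s)^3) s := by
    intro s
    have h1 := (hx' s).div (hr s) (hrpos s).ne'
    refine h1.congr_deriv ?_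
    symm
    rw [div_eq_div_iff (pow_ne_zero 3 (hrpos s).ne') (pow_ne_zero 2 (hrpos s).ne')]
    have hxx : x s * (x s / r s) * (r s)^3 = (x s)^2 * (r s)^2 := by
      field_simp [(hrpos s).ne']
    rw [sub_mul, hxx]
    linear_combination (-(r s)^2) * hρ s
  -- derivative of -y/r
  have hv' : ∀ s, HasDerivAt (fun t => -(y t) / r t)
      (x s * (K s * (r s)^2 + y s) / (r s)^3) s := by
    intro s
    have h1 := ((hy' s).neg).div (hr s) (hrpos s).ne'
    refine h1.congr_deriv ?_
    symm
    rw [div_eq_div_iff (pow_ne_zero 3 (hrpos s).ne') (pow_ne_zero 2 (hrpos s).ne')]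
    have hxx : -(y s) * (x s / r s) * (r s)^3 = -(y s) * (x s) * (r s)^2 := by
      field_simp [(hrpos s).ne']
    rw [sub_mul, Pi.neg_apply, hxx]
    ring
  -- PHASE A : x becomes nonnegative
  have phaseA : ∃ s₀, 0 ≤ s₀ ∧ 0 ≤ x s₀ := by
    by_contra hcon
    push_neg at hcon
    have hrho : ∀ s, 0 ≤ s → (r s)^2 ≤ (r 0)^2 := by
      intro s hs
      have hstay := stays_pos (fun t => (r 0)^2 - (r t)^2) (fun t => -(2 * x t)) 0
        (fun t _ => (hr2' t).const_sub ((r 0)^2))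
        (fun t ht _ => by
          show (0:ℝ) < -(2 * x t)
          linarith [hcon t ht])
        (by show (0:ℝ) ≤ (r 0)^2 - (r 0)^2; linarith)
      have h9 : (0:ℝ) ≤ (r 0)^2 - (r s)^2 := hstay s hs
      linarith
    obtain ⟨ε, hεpos, hε1, hU⟩ := lemU h hh ((r 0)^2) (pow_pos (hrpos 0) 2)
    by_cases hex : ∃ s₇, 0 ≤ s₇ ∧ -ε ≤ x s₇
    · obtain ⟨s₇, hs₇, hxε⟩ := hex
      have hstay : ∀ s, s₇ ≤ s → -ε ≤ x s := by
        intro s hs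
        have hst := stays_pos (fun t => x t + ε) (fun t => 1 + K t * y t) s₇
          (fun t _ => (hx' t).add_const ε)
          (fun t ht hzero => by
            have hxt : x t = -ε := by linarith
            have hyt : (y t)^2 ≤ (r 0)^2 := by
              have h1 : (y t)^2 ≤ (r t)^2 := by nlinarith [hρ t, sq_nonneg (x t)]
              linarith [hrho t (le_trans hs₇ ht)]
            have := hU (x t) (y t) (by rw [hxt, abs_neg, abs_of_pos hεpos]) hyt
            rw [← hc0def] at this
            linarith)
          (by show (0:ℝ) ≤ x s₇ + ε; linarith)
        have h9 : (0:ℝ) ≤ x s + ε := hst s hs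
        linarith
      have hlog := tendsto_log_aux x (fun s => 1 + K s * y s) s₇ (c0/2) (1 - s₇)
        (half_pos hc0) (by linarith)
        (fun s hs => hx' s)
        (fun s hs => by
          have hxs : -ε ≤ x s := hstay s hs
          have hxneg : x s < 0 := hcon s (le_trans hs₇ hs)
          have hyt : (y s)^2 ≤ (r 0)^2 := by
            have h1 : (y s)^2 ≤ (r s)^2 := by nlinarith [hρ s, sq_nonneg (x s)]
            linarith [hrho s (le_trans hs₇ hs)]
          have h2 := hU (x s) (y s) (by rw [abs_of_nonpos hxneg.le]; linarith) hyt
          rw [← hc0def] at h2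
          have h3 : c0/2/(1 - s₇ + s) ≤ c0/2 := by
            apply div_le_self (by positivity)
            linarith
          linarith)
      obtain ⟨s, hs1, hs2⟩ := ((hlog.eventually_ge_atTop 0).and (eventually_ge_atTop (max s₇ 0))).exists
      exact absurd (hcon s (le_trans (le_max_right _ _) hs2)) (not_lt.mpr hs1)
    · push_neg at hex
      have hlog := tendsto_log_aux (fun t => -((r t)^2)) (fun t => -(2 * x t)) 0 (2*ε) 1
        (by linarith) (by linarith)
        (fun s _ => ((hr2' s).neg))
        (fun s hs => by
          show 2*ε/(1 + s) ≤ -(2 * x s)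
          have h1 : x s < -ε := hex s hs
          have h2 : 2*ε/(1 + s) ≤ 2*ε := by
            apply div_le_self (by positivity)
            linarith
          linarith)
      obtain ⟨s, hs1, _⟩ := ((hlog.eventually_ge_atTop 1).and (eventually_ge_atTop (0:ℝ))).exists
      have hs1' : (1:ℝ) ≤ -((r s)^2) := hs1
      nlinarith [sq_nonneg (r s), hs1']
  -- PHASE B : x stays nonnegative and r² reaches and stays above R1
  obtain ⟨s₀, hs₀0, hs₀x⟩ := phaseA
  have hx0 : ∀ s, s₀ ≤ s → 0 ≤ x s := by
    intro s hs
    refine stays_pos x (fun t => 1 + K t * y t) s₀ (fun t _ => hx' t) ?_ hs₀x s hs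
    intro t _ hzero
    show (0:ℝ) < 1 + K t * y t
    have h1 : K t = kF h 0 (y t) := by rw [hK]; simp only [hzero]
    have h2 := kF_at_zero h hh (y t)
    rw [← h1] at h2
    rw [← hc0def] at h2
    linarith
  have hrmonoB : MonotoneOn (fun t => (r t)^2) (Set.Ici s₀) :=
    mono_of_deriv_nonneg _ (fun t => 2 * x t) s₀ (fun t _ => hr2' t)
      (fun t ht => by show (0:ℝ) ≤ 2 * x t; linarith [hx0 t ht])
  have hreach : ∃ s₅, s₀ ≤ s₅ ∧ R1 ≤ (r s₅)^2 := by
    by_contra hcon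
    push_neg at hcon
    obtain ⟨ε, hεpos, hε1, hU⟩ := lemU h hh R1 hR1pos
    by_cases hex : ∃ s₇, s₀ ≤ s₇ ∧ ε ≤ x s₇
    · obtain ⟨s₇, hs₇, hxε⟩ := hex
      have hstay : ∀ s, s₇ ≤ s → ε ≤ x s := by
        intro s hs
        have hst := stays_pos (fun t => x t - ε) (fun t => 1 + K t * y t) s₇
          (fun t _ => (hx' t).sub_const ε)
          (fun t ht hzero => by
            have hxt : x t = ε := by linarith
            have hyt : (y t)^2 ≤ R1 := by
              have h1 : (y t)^2 ≤ (r t)^2 := by nlinarith [hρ t, sq_nonneg (x t)]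
              linarith [hcon t (le_trans hs₇ ht)]
            have := hU (x t) (y t) (by rw [hxt, abs_of_pos hεpos]) hyt
            rw [← hc0def] at this
            linarith)
          (by show (0:ℝ) ≤ x s₇ - ε; linarith)
        have h9 : (0:ℝ) ≤ x s - ε := hst s hs
        linarith
      have hlog := tendsto_log_aux (fun t => (r t)^2) (fun t => 2 * x t) s₇ (2*ε) (1 - s₇)
        (by linarith) (by linarith)
        (fun s _ => hr2' s)
        (fun s hs => by
          show 2*ε/(1 - s₇ + s) ≤ 2 * x s
          have h1 : ε ≤ x s := hstay s hs
          have h2 : 2*ε/(1 - s₇ + s) ≤ 2*ε := by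
            apply div_le_self (by positivity)
            linarith
          linarith)
      obtain ⟨s, hs1, hs2⟩ := ((hlog.eventually_ge_atTop R1).and (eventually_ge_atTop (max s₇ s₀))).exists
      have hs1' : R1 ≤ (r s)^2 := hs1
      exact absurd (hcon s (le_trans (le_max_right _ _) hs2)) (not_lt.mpr hs1')
    · push_neg at hex
      have hlog := tendsto_log_aux x (fun s => 1 + K s * y s) s₀ (c0/2) (1 - s₀)
        (half_pos hc0) (by linarith)
        (fun s _ => hx' s)
        (fun s hs => by
          have h1 : x s < ε := hex s hs
          have h0 : 0 ≤ x s := hx0 s hs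
          have hyt : (y s)^2 ≤ R1 := by
            have h2 : (y s)^2 ≤ (r s)^2 := by nlinarith [hρ s, sq_nonneg (x s)]
            linarith [hcon s hs]
          have h2 := hU (x s) (y s) (by rw [abs_of_nonneg h0]; linarith) hyt
          rw [← hc0def] at h2
          have h3 : c0/2/(1 - s₀ + s) ≤ c0/2 := by
            apply div_le_self (by positivity)
            linarith
          linarith)
      obtain ⟨s, hs1, hs2⟩ := ((hlog.eventually_ge_atTop 1).and (eventually_ge_atTop s₀)).exists
      exact absurd (hex s hs2) (not_lt.mpr (by linarith))
  obtain ⟨s₅, hs₅, hRs₅⟩ := hreach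
  set s₂ : ℝ := s₅ with hs₂def
  have hs₂0 : 0 ≤ s₂ := le_trans hs₀0 hs₅
  have hx2 : ∀ s, s₂ ≤ s → 0 ≤ x s := fun s hs => hx0 s (le_trans hs₅ hs)
  have hR2 : ∀ s, s₂ ≤ s → R1 ≤ (r s)^2 := by
    intro s hs
    exact le_trans hRs₅ (hrmonoB (Set.mem_Ici.mpr hs₅) (Set.mem_Ici.mpr (le_trans hs₅ hs)) hs)
  -- PHASE C : the trajectory enters the region 2y ≤ -r
  have phaseC : ∃ s₃, s₂ ≤ s₃ ∧ 2 * y s₃ + r s₃ ≤ 0 := by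
    by_contra hcon
    push_neg at hcon
    -- on [s₂,∞) : 0 < 2y + r, hence W ≥ (9/10) r and A ≤ -c3 r
    have hWlow : ∀ s, s₂ ≤ s → 9 * r s ≤ 10 * (y s + 2 * x s) := by
      intro s hs
      exact W_lower (x s) (y s) (r s) (hx2 s hs) (hrpos s) (hρ s) (hcon s hs)
    have hAneg : ∀ s, s₂ ≤ s → c3 * r s ≤ K s * (r s)^2 + y s := by
      intro s hs
      apply hGood s (hR2 s hs)
      · nlinarith [hWlow s hs, hrpos s]
      · nlinarith [hWlow s hs, hrpos s]
    by_cases hex : ∃ s₇, s₂ ≤ s₇ ∧ r s₇ ≤ 2 * x s₇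
    · -- case (i): 2x ≥ r persists; then -y/r increases without bound
      obtain ⟨s₇, hs₇, hxε⟩ := hex
      have hstay : ∀ s, s₇ ≤ s → r s ≤ 2 * x s := by
        intro s hs
        have hst := stays_pos (fun t => 2 * x t - r t)
          (fun t => 2 * (1 + K t * y t) - x t / r t) s₇
          (fun t _ => ((hx' t).const_mul 2).sub (hr t))
          (fun t ht hzero => by
            -- at the boundary 2x = r : derivative = -2yA/r² = 2y(Kr²+y)/r² > 0
            have hxt : 2 * x t = r t := by linarith
            have hx2q : 4 * (x t)^2 = (r t)^2 := by
              linear_combination (2 * x t + r t) * hxt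
            have hyt2 : (y t)^2 = (3/4) * (r t)^2 := by linarith [hρ t]
            have hypos : 0 < y t := by nlinarith [hcon t (le_trans hs₇ ht), hrpos t]
            have hA := hAneg t (le_trans hs₇ ht)
            have hrt := hrpos t
            have hKey : (2 * (1 + K t * y t) - x t / r t) * (r t)^2
                = 2 * y t * (K t * (r t)^2 + y t) := by
              have heq0 : (x t / r t) * (r t)^2 = x t * r t := by
                field_simp [(hrpos t).ne']
              have expand : (2 * (1 + K t * y t) - x t / r t) * (r t)^2
                  = 2 * (1 + K t * y t) * (r t)^2 - (x t / r t) * (r t)^2 := by ring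
              rw [expand, heq0]
              linear_combination 2 * (hρ t) + (x t) * hxt
            have h2 : 0 < 2 * y t * (K t * (r t)^2 + y t) := by
              apply mul_pos (by linarith)
              nlinarith [hA, hc3, hrt]
            nlinarith [hKey, h2, sq_nonneg (r t), pow_pos hrt 2]
          )
          (by show (0:ℝ) ≤ 2 * x s₇ - r s₇; linarith)
        have h9 : (0:ℝ) ≤ 2 * x s - r s := hst s hs
        linarith
      set d : ℝ := r s₇ - s₇ with hddef
      have hd : 0 < d + s₇ := by rw [hddef]; simpa using hrpos s₇
      have hlog := tendsto_log_aux (fun t => -(y t) / r t)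
        (fun s => x s * (K s * (r s)^2 + y s) / (r s)^3) s₇ (c3/2) d
        (half_pos hc3) hd
        (fun s hs => hv' s)
        (fun s hs => by
          show c3/2/(d + s) ≤ x s * (K s * (r s)^2 + y s) / (r s)^3
          have hrs := hrpos s
          have hb1 := hAneg s (le_trans hs₇ hs)
          have hb2 : r s / 2 ≤ x s := by linarith [hstay s hs]
          have hbx : 0 ≤ x s := hx2 s (le_trans hs₇ hs)
          have hprod : (r s / 2) * (c3 * r s) ≤ x s * (K s * (r s)^2 + y s) :=
            mul_le_mul hb2 hb1 (mul_nonneg hc3.le hrs.le) hbx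
          have hdiv : (r s / 2) * (c3 * r s) / (r s)^3 ≤
              x s * (K s * (r s)^2 + y s) / (r s)^3 :=
            div_le_div_of_nonneg_right hprod (pow_pos hrs 3).le
          have heq : (r s / 2) * (c3 * r s) / (r s)^3 = c3 / (2 * r s) := by
            field_simp
          have hrle : r s ≤ d + s := by
            have := hrlin s₇ s hs
            rw [hddef]
            linarith
          have hfin : c3/2/(d + s) ≤ c3/(2 * r s) := by
            rw [div_div]
            apply div_le_div_of_nonneg_left hc3.le (by linarith [hrpos s])
            linarith
          calc c3/2/(d+s) ≤ c3/(2 * r s) := hfin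
            _ = (r s / 2) * (c3 * r s) / (r s)^3 := heq.symm
            _ ≤ _ := hdiv)
      obtain ⟨s, hs1, hs2⟩ := ((hlog.eventually_ge_atTop 2).and (eventually_ge_atTop s₇)).exists
      have hs1' : (2:ℝ) ≤ -(y s) / r s := hs1
      have : -(y s) / r s ≤ 1 := by
        rw [div_le_one (hrpos s)]
        linarith [neg_abs_le (y s), hyr s]
      linarith [hs1']
    · -- case (ii): 2x < r always; then y ≥ (6/7) r and x/r increases without bound
      push_neg at hex
      have hy67 : ∀ s, s₂ ≤ s → (6/7) * r s ≤ y s := by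
        intro s hs
        have h1 : 2 * x s < r s := hex s hs
        have h0 : 0 ≤ x s := hx2 s hs
        have h2 : (3/4) * (r s)^2 < (y s)^2 := by nlinarith [hρ s]
        have hypos : 0 < y s := by nlinarith [hcon s hs, hrpos s]
        nlinarith [hrpos s]
      set d : ℝ := r s₂ - s₂ with hddef
      have hd : 0 < d + s₂ := by rw [hddef]; simpa using hrpos s₂
      have hlog := tendsto_log_aux (fun t => x t / r t)
        (fun s => y s * (K s * (r s)^2 + y s) / (r s)^3) s₂ (6*c3/7) d
        (by linarith) hd
        (fun s hs => hu' s)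
        (fun s hs => by
          show 6*c3/7/(d + s) ≤ y s * (K s * (r s)^2 + y s) / (r s)^3
          have hrs := hrpos s
          have hb1 := hAneg s hs
          have hb2 := hy67 s hs
          have hprod : ((6/7) * r s) * (c3 * r s) ≤ y s * (K s * (r s)^2 + y s) :=
            mul_le_mul hb2 hb1 (mul_nonneg hc3.le hrs.le) (by nlinarith [hrpos s])
          have hdiv : ((6/7) * r s) * (c3 * r s) / (r s)^3 ≤
              y s * (K s * (r s)^2 + y s) / (r s)^3 :=
            div_le_div_of_nonneg_right hprod (pow_pos hrs 3).le
          have heq : ((6/7) * r s) * (c3 * r s) / (r s)^3 = (6*c3/7) / r s := by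
            field_simp
          have hrle : r s ≤ d + s := by
            have := hrlin s₂ s hs
            rw [hddef]
            linarith
          have hfin : (6*c3/7)/(d + s) ≤ (6*c3/7)/(r s) := by
            apply div_le_div_of_nonneg_left (by linarith) (hrpos s)
            linarith
          calc (6*c3/7)/(d+s) ≤ (6*c3/7)/(r s) := hfin
            _ = ((6/7) * r s) * (c3 * r s) / (r s)^3 := heq.symm
            _ ≤ _ := hdiv)
      obtain ⟨s, hs1, hs2⟩ := ((hlog.eventually_ge_atTop 2).and (eventually_ge_atTop s₂)).exists
      have hs1' : (2:ℝ) ≤ x s / r s := hs1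
      have : x s / r s ≤ 1 := by
        rw [div_le_one (hrpos s)]
        exact le_trans (le_abs_self _) (hxr s)
      linarith [hs1']
  -- PHASE D : the region 2y + r ≤ 0 is invariant ; conclude
  obtain ⟨s₃, hs₃, hys₃⟩ := phaseC
  have hstayD : ∀ s, s₃ ≤ s → 2 * y s + r s ≤ 0 := by
    intro s hs
    have hst := stays_pos (fun t => -(2 * y t) - r t)
      (fun t => 2 * (K t * x t) - x t / r t) s₃
      (fun t _ => by
        have h1 : HasDerivAt (fun u => -(2 * y u)) (2 * (K t * x t)) t := by
          have := ((hy' t).const_mul 2).neg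
          refine this.congr_deriv ?_
          symm
          ring
        exact h1.sub (hr t))
      (fun t ht hzero => by
        have hyt : 2 * y t = -(r t) := by linarith
        have hrt := hrpos t
        have hxt2 : (x t)^2 = (3/4) * (r t)^2 := by nlinarith [hρ t]
        have hx0t : 0 ≤ x t := hx2 t (le_trans hs₃ ht)
        have hxge : (4/5) * r t ≤ x t := by nlinarith
        have hA : c3 * r t ≤ K t * (r t)^2 + y t := by
          apply hGood t (hR2 t (le_trans hs₃ ht))
          · nlinarith
          · nlinarith
        have hKey : (2 * (K t * x t) - x t / r t) * (r t)^2
            = 2 * x t * (K t * (r t)^2 + y t) := by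
          have heq0 : (x t / r t) * (r t)^2 = x t * r t := by
            field_simp [(hrpos t).ne']
          have expand : (2 * (K t * x t) - x t / r t) * (r t)^2
              = 2 * (K t * x t) * (r t)^2 - (x t / r t) * (r t)^2 := by ring
          rw [expand, heq0]
          linear_combination (-(x t)) * hyt
        have h2 : 0 < 2 * x t * (K t * (r t)^2 + y t) := by
          apply mul_pos (by nlinarith)
          nlinarith [hA, hc3, hrt]
        nlinarith [hKey, h2, pow_pos hrt 2])
      (by show (0:ℝ) ≤ -(2 * y s₃) - r s₃; linarith)
    have h9 : (0:ℝ) ≤ -(2 * y s) - r s := hst s hs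
    linarith
  -- final : ω' = -y/r² ≥ 1/(2r) ≥ (1/2)/(d+s)
  set d : ℝ := r s₃ - s₃ with hddef
  have hd : 0 < d + s₃ := by rw [hddef]; simpa using hrpos s₃
  apply tendsto_log_aux ω (fun s => -(y s) / (r s)^2) s₃ (1/2) d (by norm_num) hd
    (fun s _ => hω s)
  intro s hs
  have hrs := hrpos s
  have h1 : r s / 2 ≤ -(y s) := by linarith [hstayD s hs]
  have h2 : (r s / 2) / (r s)^2 ≤ -(y s) / (r s)^2 :=
    div_le_div_of_nonneg_right h1 (pow_pos hrs 2).le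
  have heq : (r s / 2) / (r s)^2 = 1 / (2 * r s) := by
    rw [div_eq_div_iff (pow_ne_zero 2 hrs.ne') (by linarith [hrs] : (2:ℝ) * r s ≠ 0)]
    ring
  have hrle : r s ≤ d + s := by
    have := hrlin s₃ s hs
    rw [hddef]
    linarith
  have hfin : (1:ℝ)/2/(d + s) ≤ 1/(2 * r s) := by
    rw [div_div]
    apply div_le_div_of_nonneg_left (by norm_num) (by linarith [hrpos s])
    linarith
  calc (1:ℝ)/2/(d+s) ≤ 1/(2 * r s) := hfin
    _ = (r s / 2) / (r s)^2 := heq.symm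
    _ ≤ _ := h2

/-- `kF` is odd. -/
lemma kF_odd (h a b : ℝ) : kF h (-a) (-b) = -(kF h a b) := by
  rw [kF, kF, ← neg_div]
  congr 1
  · ring
  · ring


/-- the angle function `ω` of the generating planar curve `α` of a
complete helicoidal rotator of pitch `h > 0` satisfies `ω(s) → +∞` as `s → ±∞`:
each arm of `α` spirals infinitely around the origin. -/
theorem angle_function_diverges (h : ℝ) (hh : 0 < h)
    (α₁ α₂ r ω : ℝ → ℝ)
    (hα₁ : ContDiff ℝ 2 α₁) (hα₂ : ContDiff ℝ 2 α₂)
    (hunit : ∀ s : ℝ, (deriv α₁ s) ^ 2 + (deriv α₂ s) ^ 2 = 1)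
    (hsol : IsSol h (fun s => α₁ s * deriv α₁ s + α₂ s * deriv α₂ s)
      (fun s => α₂ s * deriv α₁ s - α₁ s * deriv α₂ s))
    (hr : Differentiable ℝ r) (hω : Differentiable ℝ ω)
    (hrpos : ∀ s : ℝ, 0 < r s)
    (hpolar₁ : ∀ s : ℝ, α₁ s = r s * Real.cos (ω s))
    (hpolar₂ : ∀ s : ℝ, α₂ s = r s * Real.sin (ω s)) :
    Tendsto ω atTop atTop ∧ Tendsto ω atBot atTop := by
  set X : ℝ → ℝ := fun s => α₁ s * deriv α₁ s + α₂ s * deriv α₂ s with hX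
  set Y : ℝ → ℝ := fun s => α₂ s * deriv α₁ s - α₁ s * deriv α₂ s with hY
  have hx : ∀ s, HasDerivAt X (1 + kF h (X s) (Y s) * Y s) s := fun s => (hsol s).1
  have hy : ∀ s, HasDerivAt Y (-(kF h (X s) (Y s) * X s)) s := fun s => (hsol s).2
  -- r² = α₁² + α₂²
  have hrr : ∀ s, (r s)^2 = (α₁ s)^2 + (α₂ s)^2 := by
    intro s
    rw [hpolar₁ s, hpolar₂ s]
    linear_combination (-(r s)^2) * Real.sin_sq_add_cos_sq (ω s)
  -- r² = X² + Y²
  have hρX : ∀ s, (r s)^2 = (X s)^2 + (Y s)^2 := by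
    intro s
    have h1 : (X s)^2 + (Y s)^2
        = ((α₁ s)^2 + (α₂ s)^2) * ((deriv α₁ s)^2 + (deriv α₂ s)^2) := by
      rw [hX, hY]; ring
    rw [h1, hunit s, mul_one, hrr s]
  -- derivatives of the polar expressions
  have hα₁d : ∀ s, deriv α₁ s
      = deriv r s * Real.cos (ω s) - r s * Real.sin (ω s) * deriv ω s := by
    intro s
    have hfun : α₁ = fun t => r t * Real.cos (ω t) := funext hpolar₁
    have h1 : HasDerivAt (fun t => r t * Real.cos (ω t))
        (deriv r s * Real.cos (ω s) + r s * (-Real.sin (ω s) * deriv ω s)) s :=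
      ((hr s).hasDerivAt).mul ((Real.hasDerivAt_cos (ω s)).comp s ((hω s).hasDerivAt))
    rw [hfun, h1.deriv]
    ring
  have hα₂d : ∀ s, deriv α₂ s
      = deriv r s * Real.sin (ω s) + r s * Real.cos (ω s) * deriv ω s := by
    intro s
    have hfun : α₂ = fun t => r t * Real.sin (ω t) := funext hpolar₂
    have h1 : HasDerivAt (fun t => r t * Real.sin (ω t))
        (deriv r s * Real.sin (ω s) + r s * (Real.cos (ω s) * deriv ω s)) s :=
      ((hr s).hasDerivAt).mul ((Real.hasDerivAt_sin (ω s)).comp s ((hω s).hasDerivAt))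
    rw [hfun, h1.deriv]
    ring
  -- Y = -r² ω'
  have hYω : ∀ s, Y s = -((r s)^2) * deriv ω s := by
    intro s
    have h1 : Y s = α₂ s * deriv α₁ s - α₁ s * deriv α₂ s := rfl
    rw [h1, hpolar₁ s, hpolar₂ s, hα₁d s, hα₂d s]
    linear_combination (-((r s)^2) * deriv ω s) * Real.sin_sq_add_cos_sq (ω s)
  have hωd : ∀ s, HasDerivAt ω (-(Y s) / (r s)^2) s := by
    intro s
    have h0 := (hω s).hasDerivAt
    have heq : -(Y s) / (r s)^2 = deriv ω s := by
      rw [hYω s, neg_mul, neg_neg, mul_comm, mul_div_assoc,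
        div_self (pow_ne_zero 2 (hrpos s).ne'), mul_one]
    rw [heq]
    exact h0
  -- r' = X / r
  have hrd : ∀ s, HasDerivAt r (X s / r s) s := by
    intro s
    have h1 : HasDerivAt (fun t => (r t)^2) (2 * r s * deriv r s) s := by
      have := ((hr s).hasDerivAt).pow 2
      exact this.congr_deriv (by simp [mul_comm, mul_assoc])
    have hfun : (fun t => (r t)^2) = fun t => (X t)^2 + (Y t)^2 := funext hρX
    have h2 : HasDerivAt (fun t => (X t)^2 + (Y t)^2)
        (2 * X s * (1 + kF h (X s) (Y s) * Y s)
          + 2 * Y s * (-(kF h (X s) (Y s) * X s))) s := by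
      have hx2 := ((hx s).pow 2)
      have hy2 := ((hy s).pow 2)
      have := hx2.add hy2
      refine this.congr_deriv ?_
      symm
      ring
    rw [hfun] at h1
    have h3 : 2 * r s * deriv r s
        = 2 * X s * (1 + kF h (X s) (Y s) * Y s) + 2 * Y s * (-(kF h (X s) (Y s) * X s)) :=
      h1.unique h2
    have h4 : deriv r s = X s / r s := by
      have hrne := (hrpos s).ne'
      field_simp
      nlinarith [h3]
    have h0 := (hr s).hasDerivAt
    rw [h4] at h0
    exact h0
  constructor
  · exact mainProp h hh X Y r ω hx hy hrpos hρX hrd hωd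
  · -- reflection
    set Xn : ℝ → ℝ := fun s => -(X (-s)) with hXn
    set Yn : ℝ → ℝ := fun s => -(Y (-s)) with hYn
    set rn : ℝ → ℝ := fun s => r (-s) with hrn
    set ωn : ℝ → ℝ := fun s => ω (-s) with hωn
    have hneg : ∀ s : ℝ, HasDerivAt (fun t : ℝ => -t) (-1 : ℝ) s := fun s => hasDerivAt_neg s
    have hxn : ∀ s, HasDerivAt Xn (1 + kF h (Xn s) (Yn s) * Yn s) s := by
      intro s
      have h1 := ((hx (-s)).comp s (hneg s)).neg
      refine h1.congr_deriv ?_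
      symm
      have hodd : kF h (Xn s) (Yn s) = -(kF h (X (-s)) (Y (-s))) := kF_odd h (X (-s)) (Y (-s))
      rw [hodd]
      show 1 + -(kF h (X (-s)) (Y (-s))) * (-(Y (-s)))
        = -((1 + kF h (X (-s)) (Y (-s)) * Y (-s)) * (-1))
      ring
    have hyn : ∀ s, HasDerivAt Yn (-(kF h (Xn s) (Yn s) * Xn s)) s := by
      intro s
      have h1 := ((hy (-s)).comp s (hneg s)).neg
      refine h1.congr_deriv ?_
      symm
      have hodd : kF h (Xn s) (Yn s) = -(kF h (X (-s)) (Y (-s))) := kF_odd h (X (-s)) (Y (-s))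
      rw [hodd]
      show -(-(kF h (X (-s)) (Y (-s))) * (-(X (-s))))
        = -(-(kF h (X (-s)) (Y (-s)) * X (-s)) * (-1))
      ring
    have hrnpos : ∀ s, 0 < rn s := fun s => hrpos (-s)
    have hρn : ∀ s, (rn s)^2 = (Xn s)^2 + (Yn s)^2 := by
      intro s
      show (r (-s))^2 = (-(X (-s)))^2 + (-(Y (-s)))^2
      rw [hρX (-s)]
      ring
    have hrdn : ∀ s, HasDerivAt rn (Xn s / rn s) s := by
      intro s
      have h1 := (hrd (-s)).comp s (hneg s)
      refine h1.congr_deriv ?_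
      symm
      show -(X (-s)) / r (-s) = X (-s) / r (-s) * (-1)
      ring
    have hωdn : ∀ s, HasDerivAt ωn (-(Yn s) / (rn s)^2) s := by
      intro s
      have h1 := (hωd (-s)).comp s (hneg s)
      refine h1.congr_deriv ?_
      symm
      show -(-(Y (-s))) / (r (-s))^2 = -(Y (-s)) / (r (-s))^2 * (-1)
      ring
    have hT := mainProp h hh Xn Yn rn ωn hxn hyn hrnpos hρn hrdn hωdn
    have hcomp := hT.comp tendsto_neg_atBot_atTop
    have : (ωn ∘ fun s : ℝ => -s) = ω := by
      funext s
      show ω (-(-s)) = ω s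
      rw [neg_neg]
    rwa [this] at hcomp
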